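/- arXiv:0710.0037 — 3 statements merged into one kernel-verified Lean document; each statement's English description precedes it below -/
import Mathlib

section
/- Σ_{n=1}^{∞} (1 - 2^{-2n}) · ζ(2n) / (n · (2n + 1)) = log 2, where the series converges. -/
/-!
Since `(1 - 2⁻ˢ) ζ(s) = ∑ⱼ (2j+1)⁻ˢ`, the series is the double series
`∑_{j ≥ 0, m ≥ 1} (2j+1)^(-2m) / (m (2m+1))` of nonnegative terms, which may be summed
over `m` first. With `x = 1/(2j+1)` and `1/(m(2m+1)) = 1/m - 2/(2m+1)`, the logarithmic
series give the row sum `2 - (1 + x⁻¹) log (1 + x) - (1 - x⁻¹) log (1 - x)`; for `j = 0`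
the row is `2 - 2 log 2` by comparison with harmonic numbers. The first `K` rows telescope
to `log 2 + 2 (log s_{2K} - log s_K)` with `s_n = n! / (√(2n) (n/e)ⁿ)` the Stirling
sequence, and `s_n → √π`.
-/

open Real Filter Topology Finset
open scoped Nat

theorem hasSum_of_hasSum_rows_of_nonneg {β γ : Type*} {f : β → γ → ℝ}
    (hf : ∀ b c, 0 ≤ f b c) {r : β → ℝ} {s : γ → ℝ} {a : ℝ} (hr : ∀ b, HasSum (f b) (r b))
    (ha : HasSum r a) (hs : ∀ c, HasSum (fun b => f b c) (s c)) : HasSum s a := by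
  have hsum : Summable fun p : β × γ => f p.1 p.2 :=
    (summable_prod_of_nonneg fun p => hf p.1 p.2).mpr
      ⟨fun b => (hr b).summable, ha.summable.congr fun b => ((hr b).tsum_eq).symm⟩
  have htot : HasSum (fun p : β × γ => f p.1 p.2) a := by
    convert hsum.hasSum
    exact ha.unique (hsum.hasSum.prod_fiberwise hr)
  exact ((Equiv.prodComm γ β).hasSum_iff.mpr htot).prod_fiberwise hs

theorem hasSum_one_div_two_mul_add_one_cpow {s : ℂ} (hs : 1 < s.re) :
    HasSum (fun j : ℕ => 1 / ((2 * j + 1 : ℕ) : ℂ) ^ s) ((1 - 2 ^ (-s)) * riemannZeta s) := by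
  set g : ℕ → ℂ := fun k => 1 / (k : ℂ) ^ s
  have hg : HasSum g (riemannZeta s) := by
    rw [zeta_eq_tsum_one_div_nat_cpow hs]
    exact (Complex.summable_one_div_nat_cpow.mpr hs).hasSum
  have heven : HasSum (fun k => g (2 * k)) (2 ^ (-s) * riemannZeta s) := by
    have hg2 (k : ℕ) : g (2 * k) = 2 ^ (-s) * g k := by
      simp only [g]
      rw [Nat.cast_mul, Complex.natCast_mul_natCast_cpow, Complex.cpow_neg]
      push_cast
      field_simp
    simpa only [hg2] using hg.mul_left (2 ^ (-s))
  have hodd : Summable fun k => g (2 * k + 1) :=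
    hg.summable.comp_injective fun a b h => by omega
  have htsum := hg.unique (heven.even_add_odd hodd.hasSum)
  rw [show (1 - 2 ^ (-s)) * riemannZeta s = ∑' k, g (2 * k + 1) by linear_combination htsum]
  exact hodd.hasSum

theorem hasSum_pow_div_mul_of_abs_lt_one {x : ℝ} (hx0 : x ≠ 0) (hx : |x| < 1) :
    HasSum (fun n : ℕ => x ^ (2 * n + 2) / ((n + 1) * (2 * n + 3)))
      (2 - (1 + x⁻¹) * log (1 + x) - (1 - x⁻¹) * log (1 - x)) := by
  have hx2 : |x ^ 2| < 1 := by rw [abs_pow, sq_lt_one_iff₀ (abs_nonneg x)]; exact hx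
  have h1x : 0 < 1 + x := by linarith [neg_abs_le x]
  have h1x' : 0 < 1 - x := by linarith [le_abs_self x]
  have hlog := hasSum_pow_div_log_of_abs_lt_one hx2
  rw [show 1 - x ^ 2 = (1 + x) * (1 - x) by ring, log_mul h1x.ne' h1x'.ne'] at hlog
  have hodd := (hasSum_nat_add_iff' 1).mpr (hasSum_log_sub_log_of_abs_lt_one hx)
  norm_num only [sum_range_one, pow_one] at hodd
  rw [show 2 - (1 + x⁻¹) * log (1 + x) - (1 - x⁻¹) * log (1 - x) =
    -(log (1 + x) + log (1 - x)) - x⁻¹ * (log (1 + x) - log (1 - x) - 2 * x) by field_simp; ring]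
  exact (hlog.sub (hodd.mul_left x⁻¹)).congr_fun fun n => by
    rw [← pow_mul, show 2 * (n + 1) + 1 = 2 * n + 2 + 1 by ring, pow_succ]
    push_cast
    field_simp
    ring

theorem hasSum_one_div_mul_two_mul_add_three :
    HasSum (fun n : ℕ => 1 / ((n + 1) * (2 * n + 3) : ℝ)) (2 - 2 * log 2) := by
  rw [hasSum_iff_tendsto_nat_of_nonneg (fun n => by positivity)]
  have hpartial (N : ℕ) : ∑ n ∈ range N, 1 / ((n + 1) * (2 * n + 3) : ℝ) =
      2 + 2 * harmonic N - 2 * harmonic (2 * N + 1) := by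
    induction N with
    | zero => norm_num [harmonic]
    | succ N ih =>
      rw [sum_range_succ, ih, show 2 * (N + 1) + 1 = 2 * N + 1 + 1 + 1 by ring,
        harmonic_succ (2 * N + 1 + 1), harmonic_succ (2 * N + 1), harmonic_succ N]
      push_cast
      field_simp
      ring
  have hlog (N : ℕ) : log ((2 * N + 1 : ℕ) + 1 : ℝ) = log 2 + log (N + 1) := by
    rw [← log_mul two_ne_zero (by positivity)]; push_cast; ring_nf
  have hγ := tendsto_harmonic_sub_log_add_one
  have hodd : Tendsto (fun N : ℕ => 2 * N + 1) atTop atTop :=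
    tendsto_atTop_mono (fun N => show N ≤ 2 * N + 1 by omega) tendsto_id
  have hlim := (tendsto_const_nhds (x := 2 - 2 * log 2)).add
    ((hγ.const_mul 2).sub ((hγ.comp hodd).const_mul 2))
  rw [sub_self, add_zero] at hlim
  refine hlim.congr fun N => ?_
  rw [hpartial, Function.comp_apply, hlog]
  ring

theorem sum_range_log_two_mul_add_one (K : ℕ) :
    ∑ j ∈ range K, log (2 * j + 1) = log (2 * K)! - K * log 2 - log K ! := by
  induction K with
  | zero => simp
  | succ K ih =>
    rw [sum_range_succ, ih, show 2 * (K + 1) = 2 * K + 1 + 1 by ring, Nat.factorial_succ,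
      Nat.factorial_succ, Nat.factorial_succ]
    push_cast
    rw [log_mul (by positivity) (by positivity), log_mul (by positivity) (by positivity),
      log_mul (by positivity) (by positivity),
      show (2 * K + 1 + 1 : ℝ) = 2 * (K + 1) by ring, log_mul two_ne_zero (by positivity)]
    ring

/-- The term `(2j+1)^(-2m) / (m (2m+1))` of the double series, with `m = n + 1`. -/
noncomputable def oddArray (j n : ℕ) : ℝ :=
  (2 * j + 1 : ℝ)⁻¹ ^ (2 * n + 2) / ((n + 1) * (2 * n + 3))

/-- `2 - (1 + x⁻¹) log (1 + x) - (1 - x⁻¹) log (1 - x)` at `x = 1/(2j+1)`, written so that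
it telescopes. -/
noncomputable def oddRowSum (j : ℕ) : ℝ :=
  2 + 2 * log (2 * j + 1) - (2 * (j + 1) * log (2 * (j + 1)) - 2 * j * log (2 * j))

theorem oddArray_nonneg (j n : ℕ) : 0 ≤ oddArray j n := by
  unfold oddArray
  positivity

theorem hasSum_oddArray_row (j : ℕ) : HasSum (oddArray j) (oddRowSum j) := by
  unfold oddArray
  rcases Nat.eq_zero_or_pos j with rfl | hj
  · convert hasSum_one_div_mul_two_mul_add_three using 1
    · simp
    · simp [oddRowSum]
  · have hj' : (1 : ℝ) ≤ j := by exact_mod_cast hj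
    have hx : |(2 * j + 1 : ℝ)⁻¹| < 1 := by
      rw [abs_inv, abs_of_pos (by positivity)]
      exact inv_lt_one_of_one_lt₀ (by linarith)
    convert hasSum_pow_div_mul_of_abs_lt_one (by positivity) hx using 1
    have h1 : 1 + (2 * j + 1 : ℝ)⁻¹ = 2 * (j + 1) / (2 * j + 1) := by field_simp; ring
    have h2 : 1 - (2 * j + 1 : ℝ)⁻¹ = 2 * j / (2 * j + 1) := by field_simp; ring
    rw [h1, h2, log_div (by positivity) (by positivity), log_div (by positivity) (by positivity),
      inv_inv, oddRowSum]
    ring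

theorem hasSum_oddArray_column (n : ℕ) :
    HasSum (fun j : ℕ => (oddArray j n : ℂ))
      ((1 - (2 : ℂ) ^ (-(2 * ((n : ℤ) + 1)))) * riemannZeta (2 * ((n : ℂ) + 1)) /
          (((n : ℂ) + 1) * (2 * ((n : ℂ) + 1) + 1))) := by
  have h := hasSum_one_div_two_mul_add_one_cpow (s := ((2 * n + 2 : ℕ) : ℂ))
    (by rw [Complex.natCast_re]; norm_cast; omega)
  simp only [Complex.cpow_natCast] at h
  rw [show 2 * ((n : ℂ) + 1) = ((2 * n + 2 : ℕ) : ℂ) by push_cast; ring,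
    show -(2 * ((n : ℤ) + 1)) = -((2 * n + 2 : ℕ) : ℤ) by push_cast; ring, zpow_neg,
    zpow_natCast, ← Complex.cpow_natCast, ← Complex.cpow_neg]
  refine (h.div_const _).congr_fun fun j => ?_
  unfold oddArray
  push_cast
  rw [inv_pow, one_div]
  ring

theorem sum_range_oddRowSum (K : ℕ) :
    ∑ j ∈ range K, oddRowSum j =
      2 * K + 2 * ∑ j ∈ range K, log (2 * j + 1) - 2 * K * log (2 * K) := by
  have htel := sum_range_sub (fun j : ℕ => 2 * (j : ℝ) * log (2 * j)) K
  simp only [Nat.cast_add, Nat.cast_one, Nat.cast_zero, mul_zero, zero_mul, sub_zero] at htel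
  simp only [oddRowSum, sum_sub_distrib, sum_add_distrib, htel, ← mul_sum, sum_const, card_range,
    nsmul_eq_mul]
  ring

theorem sum_range_oddRowSum_eq_log_stirlingSeq {K : ℕ} (hK : K ≠ 0) :
    ∑ j ∈ range K, oddRowSum j =
      log 2 + 2 * (log (Stirling.stirlingSeq (2 * K)) - log (Stirling.stirlingSeq K)) := by
  have hK' : (K : ℝ) ≠ 0 := by exact_mod_cast hK
  rw [sum_range_oddRowSum, sum_range_log_two_mul_add_one, Stirling.log_stirlingSeq_formula,
    Stirling.log_stirlingSeq_formula]
  push_cast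
  rw [log_div (by positivity) (exp_pos 1).ne', log_div hK' (exp_pos 1).ne', log_exp,
    show (2 * (2 * K) : ℝ) = 2 * 2 * K by ring, log_mul (by positivity) hK',
    log_mul (by positivity) hK', log_mul two_ne_zero two_ne_zero]
  ring

theorem hasSum_oddRowSum : HasSum oddRowSum (log 2) := by
  have hnonneg (j : ℕ) : 0 ≤ oddRowSum j :=
    (hasSum_oddArray_row j).nonneg (oddArray_nonneg j)
  rw [hasSum_iff_tendsto_nat_of_nonneg hnonneg]
  have hπ : (√π) ≠ 0 := (sqrt_pos.mpr pi_pos).ne'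
  have hlog := ((continuousAt_log hπ).tendsto).comp Stirling.tendsto_stirlingSeq_sqrt_pi
  have hdouble : Tendsto (fun K : ℕ => 2 * K) atTop atTop :=
    tendsto_atTop_mono (fun K => show K ≤ 2 * K by omega) tendsto_id
  have hlim := (tendsto_const_nhds (x := log 2)).add (((hlog.comp hdouble).sub hlog).const_mul 2)
  rw [sub_self, mul_zero, add_zero] at hlim
  refine hlim.congr' ?_
  filter_upwards [eventually_ne_atTop 0] with K hK
  exact (sum_range_oddRowSum_eq_log_stirlingSeq hK).symm

/-- `Σ_{n=1}^∞ (1 - 2^(-2n)) ζ(2n) / (n (2n+1)) = log 2`, the series converging. -/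
theorem stmt_1 :
    HasSum
      (fun n : ℕ =>
        (1 - (2 : ℂ) ^ (-(2 * ((n : ℤ) + 1)))) * riemannZeta (2 * ((n : ℂ) + 1)) /
          (((n : ℂ) + 1) * (2 * ((n : ℂ) + 1) + 1)))
      (Real.log 2) := by
  rw [Complex.hasSum_iff, Complex.ofReal_re, Complex.ofReal_im]
  constructor
  · exact hasSum_of_hasSum_rows_of_nonneg oddArray_nonneg hasSum_oddArray_row hasSum_oddRowSum
      fun n => (Complex.hasSum_re (hasSum_oddArray_column n)).congr_fun fun j =>
        (Complex.ofReal_re _).symm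
  · have him (n : ℕ) := hasSum_zero.unique
      ((Complex.hasSum_im (hasSum_oddArray_column n)).congr_fun fun j =>
        (Complex.ofReal_im _).symm)
    simp only [← him]
    exact hasSum_zero
end

section
/- For every positive integer m, ζ(2m) = (π^{2m} · (-1)^m / (2 · (1 - 2^{1-2m}))) · ( -1/Γ(2m+2) + Σ_{n=1}^{m-1} (2 - 2^{2m-2n}) · ζ(2n - 2m + 1) / (Γ(2n+2) · Γ(2m-2n)) ), where the sum over n is empty when m = 1. -/
/-!
Euler's formula `ζ(2m) = (-1)^(m+1) 2^(2m-1) π^(2m) B_{2m} / (2m)!` together with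
`ζ(1-2k) = -B_{2k} / (2k)` turns the identity into the relation
`∑_{i ≤ 2m+1} (2^i - 2) C(2m+1, i) B_i = 0` between Bernoulli numbers, divided by `(2m+1)!`.
That relation is `2^N B_N(1/2) - 2 B_N(1) = 0` for `N = 2m+1`, read through the expansion
`B_N(x) = ∑ C(N, i) B_i x^(N-i)`: both values vanish, `B_N(1/2)` by the symmetry
`B_N(1-x) = -B_N(x)`. In the sum only the even indices survive (the factor `2^i - 2` kills `i = 1`),
and `i = 2(m-n)` matches the `n`-th summand of the theorem.
-/

open Complex Real Finset
open scoped Nat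

theorem Polynomial.bernoulli_eval_one_half_of_odd {n : ℕ} (hn : Odd n) :
    (Polynomial.bernoulli n).eval (1 / 2 : ℚ) = 0 := by
  have h := Polynomial.bernoulli_eval_one_sub n (1 / 2)
  rw [hn.neg_one_pow] at h
  norm_num at h
  linarith

theorem Polynomial.bernoulli_eval_eq_sum (n : ℕ) (x : ℚ) :
    (Polynomial.bernoulli n).eval x =
      ∑ i ∈ range (n + 1), _root_.bernoulli i * n.choose i * x ^ (n - i) := by
  simp [Polynomial.bernoulli, eval_finsetSum]

theorem sum_two_pow_sub_two_mul_choose_mul_bernoulli {n : ℕ} (hn : Odd n) (h1 : 1 < n) :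
    ∑ i ∈ range (n + 1), ((2 : ℚ) ^ i - 2) * n.choose i * bernoulli i = 0 :=
  calc ∑ i ∈ range (n + 1), ((2 : ℚ) ^ i - 2) * n.choose i * bernoulli i
      = 2 ^ n * (Polynomial.bernoulli n).eval (1 / 2) - 2 * (Polynomial.bernoulli n).eval 1 := by
        rw [Polynomial.bernoulli_eval_eq_sum, Polynomial.bernoulli_eval_eq_sum, mul_sum, mul_sum,
          ← sum_sub_distrib]
        refine sum_congr rfl fun i hi => ?_
        have hpow : (2 : ℚ) ^ n = 2 ^ i * 2 ^ (n - i) := by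
          rw [← pow_add, Nat.add_sub_cancel' (Nat.lt_succ_iff.mp (mem_range.mp hi))]
        rw [hpow, one_div, inv_pow, one_pow]
        field_simp
    _ = 0 := by
        rw [Polynomial.bernoulli_eval_one_half_of_odd hn, Polynomial.bernoulli_eval_one,
          bernoulli'_eq_zero_of_odd hn h1]
        ring

theorem Finset.sum_range_two_mul {M : Type*} [AddCommMonoid M] (f : ℕ → M) (n : ℕ) :
    ∑ i ∈ range (2 * n), f i = ∑ k ∈ range n, f (2 * k) + ∑ k ∈ range n, f (2 * k + 1) := by
  induction n with
  | zero => simp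
  | succ n ih =>
    rw [Nat.mul_succ, sum_range_succ, sum_range_succ, ih, sum_range_succ, sum_range_succ]
    abel

theorem sum_range_two_pow_sub_two_mul_bernoulli_div_factorial {m : ℕ} (hm : 0 < m) :
    ∑ n ∈ range (m + 1), ((2 : ℚ) ^ (2 * (m - n)) - 2) * bernoulli (2 * (m - n)) /
      ((2 * (m - n))! * (2 * n + 1)!) = 0 := by
  set g : ℕ → ℚ := fun i => ((2 : ℚ) ^ i - 2) * bernoulli i / (i ! * (2 * m + 1 - i)!)
  have hsum : ∑ i ∈ range (2 * (m + 1)), g i = 0 := by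
    have hchoose : ∀ i ∈ range (2 * m + 2), g i =
        ((2 : ℚ) ^ i - 2) * (2 * m + 1).choose i * bernoulli i / (2 * m + 1)! := by
      intro i hi
      rw [Nat.cast_choose ℚ (Nat.lt_succ_iff.mp (mem_range.mp hi))]
      simp only [g]
      field_simp
    rw [Nat.mul_succ, sum_congr rfl hchoose, ← sum_div,
      sum_two_pow_sub_two_mul_choose_mul_bernoulli ⟨m, rfl⟩ (by omega), zero_div]
  have hodd : ∑ k ∈ range (m + 1), g (2 * k + 1) = 0 := by
    refine sum_eq_zero fun k _ => ?_
    rcases Nat.eq_zero_or_pos k with rfl | hk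
    · simp [g]
    · simp [g, bernoulli_eq_zero_of_odd (odd_two_mul_add_one k) (by omega)]
  rw [sum_range_two_mul, hodd, add_zero, ← sum_range_reflect] at hsum
  rw [← hsum]
  refine sum_congr rfl fun n hn => ?_
  have hnm := Nat.lt_succ_iff.mp (mem_range.mp hn)
  simp only [g, Nat.add_sub_cancel, show 2 * m + 1 - 2 * (m - n) = 2 * n + 1 by omega]

theorem Finset.sum_range_succ_eq_add_sum_Icc_add {M : Type*} [AddCommMonoid M] (f : ℕ → M)
    {m : ℕ} (hm : 0 < m) :
    ∑ n ∈ range (m + 1), f n = f 0 + ∑ n ∈ Icc 1 (m - 1), f n + f m := by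
  obtain ⟨k, rfl⟩ : ∃ k, m = k + 1 := ⟨m - 1, by omega⟩
  rw [sum_range_succ, sum_range_succ', add_comm (∑ n ∈ range k, _), Nat.add_sub_cancel,
    ← Ico_add_one_right_eq_Icc, sum_Ico_eq_sum_range, Nat.add_sub_cancel]
  simp only [add_comm 1]

theorem neg_inv_factorial_add_sum_Icc_bernoulli {m : ℕ} (hm : 0 < m) :
    -1 / ((2 * m + 1)! : ℚ) + ∑ n ∈ Icc 1 (m - 1), ((2 : ℚ) ^ (2 * (m - n)) - 2) *
      bernoulli (2 * (m - n)) / ((2 * (m - n))! * (2 * n + 1)!) =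
      -(((2 : ℚ) ^ (2 * m) - 2) * bernoulli (2 * m) / (2 * m)!) := by
  have h := sum_range_two_pow_sub_two_mul_bernoulli_div_factorial hm
  rw [sum_range_succ_eq_add_sum_Icc_add _ hm] at h
  simp only [Nat.sub_zero, Nat.sub_self, mul_zero, pow_zero, bernoulli_zero,
    Nat.factorial_zero, Nat.factorial_one, Nat.cast_one, zero_add, mul_one, one_mul] at h
  linear_combination h

theorem riemannZeta_one_sub_two_mul_div_Gamma {k : ℕ} (hk : k ≠ 0) :
    riemannZeta (1 - 2 * k) / Complex.Gamma (2 * k) = -bernoulli (2 * k) / (2 * k)! := by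
  obtain ⟨j, rfl⟩ : ∃ j, k = j + 1 := ⟨k - 1, by omega⟩
  have hzeta : (1 : ℂ) - 2 * ((j + 1 : ℕ) : ℂ) = -((2 * j + 1 : ℕ) : ℂ) := by push_cast; ring
  have hGamma : 2 * ((j + 1 : ℕ) : ℂ) = ((2 * j + 1 : ℕ) : ℂ) + 1 := by push_cast; ring
  rw [hzeta, hGamma, riemannZeta_neg_nat_eq_bernoulli, Complex.Gamma_nat_eq_factorial,
    (odd_two_mul_add_one j).neg_one_pow, show 2 * (j + 1) = 2 * j + 1 + 1 by ring,
    Nat.factorial_succ (2 * j + 1)]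
  push_cast
  field_simp

theorem riemannZeta_term_eq_bernoulli {m n : ℕ} (hn : n ∈ Icc 1 (m - 1)) :
    (2 - (2 : ℂ) ^ (2 * (m : ℤ) - 2 * n)) * riemannZeta ((2 * (n : ℤ) - 2 * m + 1 : ℤ) : ℂ) /
      (Complex.Gamma (2 * (n : ℂ) + 2) * Complex.Gamma (2 * (m : ℂ) - 2 * n)) =
      ((2 : ℂ) ^ (2 * (m - n)) - 2) * bernoulli (2 * (m - n)) /
        ((2 * (m - n))! * (2 * n + 1)!) := by
  rw [mem_Icc] at hn
  have hcast : ((m - n : ℕ) : ℂ) = m - n := by push_cast [Nat.cast_sub (by omega : n ≤ m)]; rfl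
  have hzeta : ((2 * (n : ℤ) - 2 * m + 1 : ℤ) : ℂ) = 1 - 2 * ((m - n : ℕ) : ℂ) := by
    rw [hcast]; push_cast; ring
  have hpow : (2 : ℂ) ^ (2 * (m : ℤ) - 2 * n) = 2 ^ (2 * (m - n)) := by
    rw [← zpow_natCast]; congr 1; omega
  have hGamma : 2 * (n : ℂ) + 2 = ((2 * n + 1 : ℕ) : ℂ) + 1 := by push_cast; ring
  rw [hzeta, hpow, hGamma, Complex.Gamma_nat_eq_factorial,
    show 2 * (m : ℂ) - 2 * n = 2 * ((m - n : ℕ) : ℂ) by rw [hcast]; ring]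
  calc _ = (2 - (2 : ℂ) ^ (2 * (m - n))) *
        (riemannZeta (1 - 2 * ((m - n : ℕ) : ℂ)) / Complex.Gamma (2 * ((m - n : ℕ) : ℂ))) /
          (2 * n + 1)! := by ring
    _ = _ := by rw [riemannZeta_one_sub_two_mul_div_Gamma (by omega)]; ring

/-- For every positive integer `m`,
`ζ(2m) = (π^(2m) (-1)^m / (2 (1 - 2^(1-2m)))) ·
  (-1/Γ(2m+2) + Σ_{n=1}^{m-1} (2 - 2^(2m-2n)) ζ(2n-2m+1) / (Γ(2n+2) Γ(2m-2n)))`. -/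
theorem stmt_2 (m : ℕ) (hm : 0 < m) :
    riemannZeta (2 * (m : ℂ)) =
      (π : ℂ) ^ (2 * m) * (-1) ^ m / (2 * (1 - (2 : ℂ) ^ (1 - 2 * (m : ℤ)))) *
        (-1 / Complex.Gamma (2 * (m : ℂ) + 2) +
          ∑ n ∈ Finset.Icc 1 (m - 1),
            (2 - (2 : ℂ) ^ (2 * (m : ℤ) - 2 * n)) *
              riemannZeta ((2 * (n : ℤ) - 2 * m + 1 : ℤ) : ℂ) /
              (Complex.Gamma (2 * (n : ℂ) + 2) *
                Complex.Gamma (2 * (m : ℂ) - 2 * n))) := by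
  have hbracket := congrArg ((↑) : ℚ → ℂ) (neg_inv_factorial_add_sum_Icc_bernoulli hm)
  push_cast at hbracket
  rw [show 2 * (m : ℂ) + 2 = ((2 * m + 1 : ℕ) : ℂ) + 1 by push_cast; ring,
    Complex.Gamma_nat_eq_factorial, sum_congr rfl fun n hn => riemannZeta_term_eq_bernoulli hn,
    hbracket, riemannZeta_two_mul_nat hm.ne']
  have hpow : (2 : ℂ) ^ (2 * m) = 2 * 2 ^ (2 * m - 1) := (mul_pow_sub_one (by omega) 2).symm
  have hinv : (2 : ℂ) ^ (1 - 2 * (m : ℤ)) = (2 ^ (2 * m - 1))⁻¹ := by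
    rw [← zpow_natCast, ← zpow_neg]; congr 1; omega
  have hne : (2 : ℂ) ^ (2 * m - 1) ≠ 1 := by exact_mod_cast (Nat.one_lt_two_pow (by omega)).ne'
  rw [hpow, hinv]
  field_simp [sub_ne_zero.mpr hne]
  ring
end

section
/- For every positive integer n, the derivative of the Riemann zeta function at the negative even integer -2n satisfies ζ'(-2n) = (-1)^n · Γ(2n+1) / (2 · (2π)^{2n}) · ζ(2n+1). -/
/-!
Differentiate the functional equation
`ζ(1 - s) = 2 (2π)^(-s) Γ(s) cos(πs/2) ζ(s)` at `s = 2n + 1`. There `cos(πs/2)` vanishes, so by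
the product rule only the derivative of the cosine factor survives, and
`-ζ'(-2n) = 2 (2π)^(-2n-1) Γ(2n+1) ζ(2n+1) · (-(π/2) sin(πs/2))` with `sin(πs/2) = (-1)^n`.
-/

open Complex Real Filter Topology

theorem hasDerivAt_mul_of_right_eq_zero {𝕜 𝔸 : Type*} [NontriviallyNormedField 𝕜] [NormedRing 𝔸]
    [NormedAlgebra 𝕜 𝔸] {f g : 𝕜 → 𝔸} {g' : 𝔸} {x : 𝕜} (hf : DifferentiableAt 𝕜 f x)
    (hg : HasDerivAt g g' x) (hgx : g x = 0) :
    HasDerivAt (fun y => f y * g y) (f x * g') x := by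
  simpa [hgx] using hf.hasDerivAt.fun_mul hg

theorem Complex.ne_neg_natCast_of_re_pos {s : ℂ} (hs : 0 < s.re) (m : ℕ) : s ≠ -m := by
  rintro rfl
  simp at hs
  linarith [m.cast_nonneg (α := ℝ)]

theorem riemannZeta_one_sub_eventuallyEq {s : ℂ} (hs : 1 < s.re) :
    (fun z => riemannZeta (1 - z)) =ᶠ[𝓝 s]
      fun z => 2 * (2 * π) ^ (-z) * Complex.Gamma z * riemannZeta z * cos (π * z / 2) := by
  filter_upwards [continuous_re.continuousAt.eventually (eventually_gt_nhds hs)] with z hz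
  rw [riemannZeta_one_sub (ne_neg_natCast_of_re_pos (by linarith))
    (by rintro rfl; simp at hz)]
  ring

theorem deriv_riemannZeta_one_sub_of_cos_eq_zero {s : ℂ} (hs : 1 < s.re)
    (hcos : cos (π * s / 2) = 0) :
    deriv riemannZeta (1 - s) =
      π * (2 * π) ^ (-s) * Complex.Gamma s * riemannZeta s * sin (π * s / 2) := by
  have hζ₁ : DifferentiableAt ℂ riemannZeta (1 - s) :=
    differentiableAt_riemannZeta (by rintro h; norm_num [sub_eq_self.mp h] at hs)
  have hlhs : HasDerivAt (fun z => riemannZeta (1 - z)) (-deriv riemannZeta (1 - s)) s :=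
    hζ₁.hasDerivAt.comp_const_sub 1 s
  have hpow : DifferentiableAt ℂ (fun z : ℂ => (2 * (π : ℂ)) ^ (-z)) s :=
    (differentiableAt_neg_iff.mpr differentiableAt_id).const_cpow
      (Or.inl (by exact_mod_cast two_pi_pos.ne'))
  have hfactor : DifferentiableAt ℂ
      (fun z => 2 * (2 * (π : ℂ)) ^ (-z) * Complex.Gamma z * riemannZeta z) s :=
    ((hpow.const_mul 2).mul
      (Complex.differentiableAt_Gamma _ (ne_neg_natCast_of_re_pos (by linarith)))).mul
      (differentiableAt_riemannZeta (by rintro rfl; simp at hs))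
  have hcos' : HasDerivAt (fun z : ℂ => cos (π * z / 2)) (-sin (π * s / 2) * (π / 2)) s :=
    (((hasDerivAt_id s).const_mul (π : ℂ)).div_const 2).ccos.congr_deriv (by simp)
  have hrhs := (hasDerivAt_mul_of_right_eq_zero hfactor hcos' hcos).congr_of_eventuallyEq
    (riemannZeta_one_sub_eventuallyEq hs)
  linear_combination -(hlhs.unique hrhs)

theorem Complex.cos_pi_mul_two_mul_nat_add_one_div_two (n : ℕ) :
    cos (π * (2 * n + 1) / 2) = 0 := by
  have h : (π : ℂ) * (2 * n + 1) / 2 = ((π / 2 + n * π : ℝ) : ℂ) := by push_cast; ring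
  rw [h, ← ofReal_cos, Real.cos_add_nat_mul_pi, Real.cos_pi_div_two, mul_zero, ofReal_zero]

theorem Complex.sin_pi_mul_two_mul_nat_add_one_div_two (n : ℕ) :
    sin (π * (2 * n + 1) / 2) = (-1) ^ n := by
  have h : (π : ℂ) * (2 * n + 1) / 2 = ((π / 2 + n * π : ℝ) : ℂ) := by push_cast; ring
  rw [h, ← ofReal_sin, Real.sin_add_nat_mul_pi, Real.sin_pi_div_two, mul_one]
  push_cast
  rfl

/-- For every positive integer `n`,
`ζ'(-2n) = (-1)^n Γ(2n+1) / (2 (2π)^(2n)) · ζ(2n+1)`. -/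
theorem stmt_8 (n : ℕ) (hn : 0 < n) :
    deriv riemannZeta (-(2 * (n : ℂ))) =
      (-1) ^ n * Complex.Gamma (2 * (n : ℂ) + 1) / (2 * (2 * (π : ℂ)) ^ (2 * n)) *
        riemannZeta (2 * (n : ℂ) + 1) := by
  have hre : 1 < (2 * (n : ℂ) + 1).re := by simp; exact_mod_cast hn
  have hderiv := deriv_riemannZeta_one_sub_of_cos_eq_zero hre
    (cos_pi_mul_two_mul_nat_add_one_div_two n)
  rw [sin_pi_mul_two_mul_nat_add_one_div_two, show 1 - (2 * (n : ℂ) + 1) = -(2 * n) by ring,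
    show -(2 * (n : ℂ) + 1) = -((2 * n + 1 : ℕ) : ℂ) by push_cast; rfl, cpow_neg, cpow_natCast,
    pow_succ] at hderiv
  rw [hderiv]
  have hπ : (π : ℂ) ≠ 0 := by exact_mod_cast pi_ne_zero
  field_simp
end
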